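/- arXiv:2002.07152 — 3 statements merged into one kernel-verified Lean document; each statement's English description precedes it below -/
import Mathlib

section
/- For every positive integer d and ℓ with d·ℓ > d, there exists a finite simple graph G with positive edge weights, a shortest path π in G missing ℓ edges from a subgraph H that includes at least d edges incident to every endpoint of each missing edge, such that the number of vertices adjacent to π in H is exactly d (and in particular is not Ω(d·ℓ)). Concretely: take a path π of ℓ+1 vertices with each edge of weight ε, and d extra vertices each joined to every vertex of π by an edge of weight W > ε·ℓ; then π is a shortest path, H consisting of all weight-W edges contains d edges at each path vertex, misses all ℓ path edges, yet only d vertices are adjacent to π in H. -/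
open scoped Classical

/-- The weight of a walk: the sum of the weights of its edges. -/
def walkWeight {V : Type*} {G : SimpleGraph V} (w : Sym2 V → ℝ) {s t : V}
    (p : G.Walk s t) : ℝ :=
  (p.edges.map w).sum

namespace Stmt8Aux

open SimpleGraph Sum

theorem walkWeight_nil {V : Type*} {G : SimpleGraph V} (w : Sym2 V → ℝ) {s : V} :
    walkWeight w (Walk.nil : G.Walk s s) = 0 := rfl

theorem walkWeight_cons {V : Type*} {G : SimpleGraph V} (w : Sym2 V → ℝ) {s u t : V}
    (h : G.Adj s u) (p : G.Walk u t) :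
    walkWeight w (Walk.cons h p) = w s(s, u) + walkWeight w p := by
  simp [walkWeight]

theorem walkWeight_concat {V : Type*} {G : SimpleGraph V} (w : Sym2 V → ℝ) {s u t : V}
    (p : G.Walk s u) (h : G.Adj u t) :
    walkWeight w (p.concat h) = walkWeight w p + w s(u, t) := by
  simp [walkWeight, Walk.edges_concat]

/-- Potential-function lower bound on walk weight. -/
theorem le_walkWeight {V : Type*} {G : SimpleGraph V} (w : Sym2 V → ℝ) (f : V → ℝ)
    (hf : ∀ a b, G.Adj a b → |f a - f b| ≤ w s(a, b)) :
    ∀ {s t : V} (q : G.Walk s t), |f s - f t| ≤ walkWeight w q := by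
  intro s t q
  induction q with
  | nil => simp [walkWeight_nil]
  | @cons a b c h q ih =>
    rw [walkWeight_cons]
    calc |f a - f c| ≤ |f a - f b| + |f b - f c| := abs_sub_le _ _ _
      _ ≤ w s(a, b) + walkWeight w q := add_le_add (hf a b h) ih

variable (d ℓ : ℕ)

abbrev Vtx := Sum (Fin (ℓ + 1)) (Fin d)

def rel (a b : Vtx d ℓ) : Prop :=
  (∃ i j : Fin (ℓ + 1), a = inl i ∧ b = inl j ∧ (i : ℕ) + 1 = (j : ℕ)) ∨
    (a.isLeft ∧ b.isRight)

def Gr : SimpleGraph (Vtx d ℓ) := SimpleGraph.fromRel (rel d ℓ)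

def Hg : SimpleGraph (Vtx d ℓ) := SimpleGraph.fromRel (fun a b => a.isLeft ∧ b.isRight)

def wf : Sym2 (Vtx d ℓ) → ℝ :=
  Sym2.lift ⟨fun a b => if (a.isLeft ∧ b.isRight) ∨ (b.isLeft ∧ a.isRight)
      then (ℓ + 1 : ℝ) else 1,
    fun a b => if_congr or_comm rfl rfl⟩

theorem wf_left (i j : Fin (ℓ + 1)) : wf d ℓ s(inl i, inl j) = 1 := by
  simp [wf]

theorem wf_cross (i : Fin (ℓ + 1)) (j : Fin d) : wf d ℓ s(inl i, inr j) = (ℓ + 1 : ℝ) := by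
  simp [wf]

theorem Hg_le_Gr : Hg d ℓ ≤ Gr d ℓ := by
  intro a b hab
  rw [Hg, SimpleGraph.fromRel_adj] at hab
  rw [Gr, SimpleGraph.fromRel_adj]
  exact ⟨hab.1, hab.2.imp (fun h => Or.inr h) (fun h => Or.inr h)⟩

theorem Hg_adj (a b : Vtx d ℓ) :
    (Hg d ℓ).Adj a b ↔ a ≠ b ∧ ((a.isLeft ∧ b.isRight) ∨ (b.isLeft ∧ a.isRight)) := by
  rw [Hg, SimpleGraph.fromRel_adj]

theorem Hg_adj_inl_iff (i : Fin (ℓ + 1)) (x : Vtx d ℓ) :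
    (Hg d ℓ).Adj (inl i) x ↔ ∃ j : Fin d, x = inr j := by
  rw [Hg_adj]
  constructor
  · rintro ⟨-, h | h⟩
    · rcases x with x | x
      · simp at h
      · exact ⟨x, rfl⟩
    · simp at h
  · rintro ⟨j, rfl⟩
    simp

theorem adj_succ (k : ℕ) (h : k + 1 ≤ ℓ) :
    (Gr d ℓ).Adj (inl ⟨k, Nat.lt_succ_of_le (Nat.le_of_succ_le h)⟩)
      (inl ⟨k + 1, Nat.lt_succ_of_le h⟩) := by
  rw [Gr, SimpleGraph.fromRel_adj]
  refine ⟨by simp [Nat.ne_of_lt (Nat.lt_succ_self k)], Or.inl (Or.inl ?_)⟩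
  exact ⟨_, _, rfl, rfl, rfl⟩

def pw : ∀ (k : ℕ) (h : k ≤ ℓ),
    (Gr d ℓ).Walk (inl ⟨0, Nat.succ_pos ℓ⟩) (inl ⟨k, Nat.lt_succ_of_le h⟩)
  | 0, _ => Walk.nil
  | (k + 1), h => (pw k (Nat.le_of_succ_le h)).concat (adj_succ d ℓ k h)

theorem pw_length (k : ℕ) (h : k ≤ ℓ) : (pw d ℓ k h).length = k := by
  induction k with
  | zero => rfl
  | succ k ih => rw [pw, Walk.length_concat, ih (Nat.le_of_succ_le h)]

theorem pw_support (k : ℕ) (h : k ≤ ℓ) (v : Vtx d ℓ) :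
    v ∈ (pw d ℓ k h).support ↔ ∃ i : Fin (ℓ + 1), (i : ℕ) ≤ k ∧ v = inl i := by
  induction k with
  | zero =>
    simp only [pw, Walk.support_nil, List.mem_singleton]
    constructor
    · rintro rfl; exact ⟨_, Nat.le_refl 0, rfl⟩
    · rintro ⟨i, hi, rfl⟩
      congr 1
      exact Fin.ext (by simpa using hi)
  | succ k ih =>
    simp only [pw, Walk.support_concat, List.concat_eq_append, List.mem_append, List.mem_singleton, ih (Nat.le_of_succ_le h)]
    constructor
    · rintro (⟨i, hi, rfl⟩ | rfl)
      · exact ⟨i, Nat.le_succ_of_le hi, rfl⟩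
      · exact ⟨⟨k+1, Nat.lt_succ_of_le h⟩, le_refl _, rfl⟩
    · rintro ⟨i, hi, rfl⟩
      rcases Nat.lt_succ_iff_lt_or_eq.mp (Nat.lt_succ_of_le hi) with hi' | hi'
      · exact Or.inl ⟨i, Nat.lt_succ_iff.mp hi', rfl⟩
      · right; congr 1; exact Fin.ext hi'

theorem pw_isPath (k : ℕ) (h : k ≤ ℓ) : (pw d ℓ k h).IsPath := by
  induction k with
  | zero => exact Walk.IsPath.nil
  | succ k ih =>
    rw [pw, ← Walk.isPath_reverse_iff, Walk.reverse_concat, Walk.cons_isPath_iff,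
      Walk.isPath_reverse_iff]
    refine ⟨ih (Nat.le_of_succ_le h), ?_⟩
    rw [Walk.support_reverse, List.mem_reverse, pw_support]
    rintro ⟨i, hi, hv⟩
    have : (k + 1 : ℕ) = (i : ℕ) := by
      have := inl.inj hv
      exact congrArg Fin.val this
    omega

theorem pw_edges (k : ℕ) (h : k ≤ ℓ) (e : Sym2 (Vtx d ℓ)) (he : e ∈ (pw d ℓ k h).edges) :
    ∃ i j : Fin (ℓ + 1), e = s(inl i, inl j) := by
  induction k with
  | zero => simp [pw] at he
  | succ k ih =>
    rw [pw, Walk.edges_concat, List.concat_eq_append, List.mem_append, List.mem_singleton] at he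
    rcases he with he | rfl
    · exact ih (Nat.le_of_succ_le h) he
    · exact ⟨_, _, rfl⟩

theorem pw_weight (k : ℕ) (h : k ≤ ℓ) : walkWeight (wf d ℓ) (pw d ℓ k h) = k := by
  induction k with
  | zero => simp [pw, walkWeight_nil]
  | succ k ih =>
    rw [pw, walkWeight_concat, ih (Nat.le_of_succ_le h), wf_left]
    push_cast
    ring

def pot : Vtx d ℓ → ℝ
  | inl i => (i : ℕ)
  | inr _ => 0

theorem pot_spec (a b : Vtx d ℓ) (hab : (Gr d ℓ).Adj a b) :
    |pot d ℓ a - pot d ℓ b| ≤ wf d ℓ s(a, b) := by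
  rw [Gr, SimpleGraph.fromRel_adj] at hab
  have key : ∀ a b : Vtx d ℓ, rel d ℓ a b → |pot d ℓ a - pot d ℓ b| ≤ wf d ℓ s(a, b) := by
    rintro a b (⟨i, j, rfl, rfl, hij⟩ | ⟨ha, hb⟩)
    · rw [wf_left, pot, pot]
      have : (j : ℝ) = (i : ℕ) + 1 := by exact_mod_cast hij.symm
      rw [this]
      simp [abs_of_nonpos]
    · rcases a with i | i
      · rcases b with j | j
        · simp at hb
        · rw [wf_cross, pot, pot]
          have hi : (i : ℝ) ≤ ℓ := by exact_mod_cast Nat.lt_succ_iff.mp i.isLt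
          rw [sub_zero, abs_of_nonneg (by positivity)]
          linarith
      · simp at ha
  rcases hab.2 with h | h
  · exact key a b h
  · rw [abs_sub_comm, Sym2.eq_swap]
    exact key b a h

end Stmt8Aux

open SimpleGraph Sum Stmt8Aux

/-- Counterexample (Figure 1 of "Weighted Additive Spanners"). -/
theorem stmt_8 (d ℓ : ℕ) (hd : 0 < d) (hℓ : 0 < ℓ) (hdℓ : d < d * ℓ) :
    ∃ (V : Type) (_ : Fintype V) (G : SimpleGraph V) (w : Sym2 V → ℝ)
      (H : SimpleGraph V) (s t : V) (p : G.Walk s t),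
      H ≤ G ∧
      (∀ e ∈ G.edgeSet, 0 < w e) ∧
      p.IsPath ∧
      (∀ q : G.Walk s t, walkWeight w p ≤ walkWeight w q) ∧
      p.length = ℓ ∧
      (∀ e ∈ p.edges, e ∉ H.edgeSet) ∧
      (∀ v ∈ p.support, d ≤ (Finset.univ.filter (fun u : V => H.Adj v u)).card) ∧
      (Finset.univ.filter (fun x : V => ∃ u ∈ p.support, H.Adj u x)).card = d := by
  refine ⟨Vtx d ℓ, inferInstance, Gr d ℓ, wf d ℓ, Hg d ℓ, _, _, pw d ℓ ℓ le_rfl,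
    Hg_le_Gr d ℓ, ?_, pw_isPath d ℓ ℓ le_rfl, ?_, pw_length d ℓ ℓ le_rfl, ?_, ?_, ?_⟩
  · -- positive weights
    intro e _
    induction e using Sym2.inductionOn with
    | hf a b =>
      rcases a with i | i <;> rcases b with j | j <;>
        simp [wf, Sym2.lift_mk] <;> first | positivity | (split <;> positivity)
  · -- shortest path
    intro q
    have h1 := le_walkWeight (wf d ℓ) (pot d ℓ) (pot_spec d ℓ) q
    have h2 : |pot d ℓ (inl ⟨0, Nat.succ_pos ℓ⟩) - pot d ℓ (inl ⟨ℓ, Nat.lt_succ_of_le le_rfl⟩)|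
        = (ℓ : ℝ) := by
      simp [pot, abs_of_nonpos]
    rw [pw_weight, ← h2]
    exact h1
  · -- path edges missing from H
    intro e he heH
    obtain ⟨i, j, rfl⟩ := pw_edges d ℓ ℓ le_rfl e he
    rw [SimpleGraph.mem_edgeSet, Hg_adj] at heH
    rcases heH with ⟨-, h | h⟩ <;> simp at h
  · -- degree lower bound
    intro v hv
    obtain ⟨i, -, rfl⟩ := (pw_support d ℓ ℓ le_rfl v).mp hv
    have hsub : (Finset.univ.image (inr : Fin d → Vtx d ℓ)) ⊆
        Finset.univ.filter (fun u => (Hg d ℓ).Adj (inl i) u) := by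
      intro x hx
      simp only [Finset.mem_image, Finset.mem_univ, true_and] at hx
      obtain ⟨j, rfl⟩ := hx
      simp only [Finset.mem_filter, Finset.mem_univ, true_and]
      exact (Hg_adj_inl_iff d ℓ i (inr j)).mpr ⟨j, rfl⟩
    calc d = (Finset.univ.image (inr : Fin d → Vtx d ℓ)).card := by
            rw [Finset.card_image_of_injective _ inr_injective, Finset.card_univ,
              Fintype.card_fin]
      _ ≤ _ := Finset.card_le_card hsub
  · -- exact neighborhood size
    have : Finset.univ.filter (fun x : Vtx d ℓ =>
        ∃ u ∈ (pw d ℓ ℓ le_rfl).support, (Hg d ℓ).Adj u x)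
        = Finset.univ.image (inr : Fin d → Vtx d ℓ) := by
      ext x
      simp only [Finset.mem_filter, Finset.mem_univ, true_and, Finset.mem_image]
      constructor
      · rintro ⟨u, hu, hadj⟩
        obtain ⟨i, -, rfl⟩ := (pw_support d ℓ ℓ le_rfl u).mp hu
        obtain ⟨j, rfl⟩ := (Hg_adj_inl_iff d ℓ i x).mp hadj
        exact ⟨j, rfl⟩
      · rintro ⟨j, -, rfl⟩
        refine ⟨inl ⟨0, Nat.succ_pos ℓ⟩, Walk.start_mem_support _, ?_⟩
        exact (Hg_adj_inl_iff d ℓ _ (inr j)).mpr ⟨j, rfl⟩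
    rw [this, Finset.card_image_of_injective _ inr_injective, Finset.card_univ,
      Fintype.card_fin]
end

section
/- Let G be a finite simple graph with strictly positive edge weights and let H be a d-light initialization of G (for each vertex v, H contains the d lightest edges incident to v, or all incident edges if deg(v) < d, ties broken by a fixed linear order). Let π be a shortest path in G and suppose ℓ ≥ 1 edges of π are absent from H. Then at least d·ℓ/12 vertices of G are adjacent in H to some vertex of π. -/
open scoped Classical

section listlemmas

variable {α : Type*}

lemma ws_sum_map (f : α → ℝ) (a0 : α) : ∀ (L : List α),
    (L.map f).sum = ∑ i ∈ Finset.range L.length, f (L.getD i a0) := by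
  intro L
  induction L with
  | nil => simp
  | cons x tl ih =>
    rw [List.map_cons, List.sum_cons, ih, List.length_cons, Finset.sum_range_succ']
    simp [List.getD_cons_succ, List.getD_cons_zero, add_comm]

lemma ws_filter_len (q : α → Bool) (a0 : α) : ∀ (L : List α),
    (L.filter q).length =
      ((Finset.range L.length).filter (fun i => q (L.getD i a0) = true)).card := by
  intro L
  induction L with
  | nil => simp
  | cons x tl ih =>
    rw [Finset.card_filter, List.length_cons, Finset.sum_range_succ']
    simp only [List.getD_cons_succ, List.getD_cons_zero, ← Finset.card_filter, ← ih]
    by_cases hx : q x = true <;> simp [List.filter_cons, hx]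

lemma ws_sum_take (L : List ℝ) : ∀ c, c ≤ L.length →
    (L.take c).sum = ∑ i ∈ Finset.range c, L.getD i 0 := by
  induction L with
  | nil => intro c hc; simp at hc; simp [hc]
  | cons x tl ih =>
    intro c hc
    cases c with
    | zero => simp
    | succ c =>
      rw [List.take_succ_cons, List.sum_cons, ih c (by simpa using hc),
        Finset.sum_range_succ']
      simp [add_comm]

end listlemmas

section walklemmas

variable {V : Type*} {G : SimpleGraph V}

lemma ws_edges_getD (e0 : Sym2 V) : ∀ {u v : V} (p : G.Walk u v) (i : ℕ), i < p.length →
    p.edges.getD i e0 = s(p.getVert i, p.getVert (i+1)) := by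
  intro u v p
  induction p with
  | nil => intro i hi; simp at hi
  | @cons a b c h q ih =>
    intro i hi
    cases i with
    | zero => simp [SimpleGraph.Walk.edges_cons]
    | succ i =>
      rw [SimpleGraph.Walk.edges_cons, List.getD_cons_succ,
        SimpleGraph.Walk.getVert_cons_succ, SimpleGraph.Walk.getVert_cons_succ]
      exact ih i (by simpa [SimpleGraph.Walk.length_cons] using hi)

/-- take the first `n` darts of a walk -/
def wsTake {u v : V} : (p : G.Walk u v) → (n : ℕ) → G.Walk u (p.getVert n)
  | SimpleGraph.Walk.nil, _ => SimpleGraph.Walk.nil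
  | SimpleGraph.Walk.cons _ _, 0 => SimpleGraph.Walk.nil
  | SimpleGraph.Walk.cons h q, n + 1 => SimpleGraph.Walk.cons h (wsTake q n)

lemma ws_edges_wsTake {u v : V} : ∀ (p : G.Walk u v) (n : ℕ),
    (wsTake p n).edges = p.edges.take n := by
  intro p
  induction p with
  | nil => intro n; simp [wsTake]
  | @cons a b c h q ih =>
    intro n
    cases n with
    | zero => rfl
    | succ n => simp [wsTake, SimpleGraph.Walk.edges_cons, ih]

lemma ws_edges_drop {u v : V} : ∀ (p : G.Walk u v) (n : ℕ),
    (p.drop n).edges = p.edges.drop n := by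
  intro p
  induction p with
  | nil => intro n; simp [SimpleGraph.Walk.drop]
  | @cons a b c h q ih =>
    intro n
    cases n with
    | zero => simp [SimpleGraph.Walk.drop]
    | succ n => simp [SimpleGraph.Walk.drop, SimpleGraph.Walk.edges_cons, ih]

lemma ws_splice {s t : V} (w : Sym2 V → ℝ) (p : G.Walk s t)
    (hshort : ∀ q : G.Walk s t, walkWeight w p ≤ walkWeight w q)
    (e0 : Sym2 V) (a b : ℕ) (hab : a ≤ b) (hb : b ≤ p.length) {x : V}
    (h1 : G.Adj (p.getVert a) x) (h2 : G.Adj x (p.getVert b)) :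
    ∑ i ∈ Finset.Ico a b, w (p.edges.getD i e0)
      ≤ w s(p.getVert a, x) + w s(x, p.getVert b) := by
  set M : List ℝ := p.edges.map w with hM
  have hMlen : M.length = p.length := by simp [hM]
  have hgetD : ∀ i, i < p.length → M.getD i 0 = w (p.edges.getD i e0) := by
    intro i hi
    rw [hM, List.getD_eq_getElem _ _ (by simpa [hM] using hi), List.getElem_map,
      List.getD_eq_getElem _ _ (by simpa using hi)]
  -- the spliced walk
  let q : G.Walk s t := (wsTake p a).append
    (SimpleGraph.Walk.cons h1 (SimpleGraph.Walk.cons h2 (p.drop b)))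
  have hq : walkWeight w q = (M.take a).sum + w s(p.getVert a, x) + w s(x, p.getVert b)
      + (M.drop b).sum := by
    simp only [q, walkWeight, SimpleGraph.Walk.edges_append, SimpleGraph.Walk.edges_cons,
      ws_edges_wsTake, ws_edges_drop, List.map_append, List.map_cons, List.sum_append,
      List.sum_cons, hM, List.map_take, List.map_drop]
    ring
  have hp : walkWeight w p = (M.take b).sum + (M.drop b).sum := by
    rw [walkWeight, ← hM, ← List.sum_append, List.take_append_drop]
  have hkey := hshort q
  rw [hp, hq] at hkey
  have htake : ∀ c, c ≤ p.length → (M.take c).sum = ∑ i ∈ Finset.range c, M.getD i 0 :=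
    fun c hc => ws_sum_take M c (by omega)
  have hIco : ∑ i ∈ Finset.Ico a b, w (p.edges.getD i e0)
      = (M.take b).sum - (M.take a).sum := by
    rw [htake b hb, htake a (le_trans hab hb), ← Finset.sum_Ico_eq_sub _ hab]
    apply Finset.sum_congr rfl
    intro i hi
    rw [Finset.mem_Ico] at hi
    rw [hgetD i (lt_of_lt_of_le hi.2 hb)]
  rw [hIco]
  linarith

end walklemmas

section nstar

open Finset

variable {V : Type*} [Fintype V] (G : SimpleGraph V)
variable (tb : Sym2 V → Sym2 V → Prop) [IsStrictTotalOrder (Sym2 V) tb]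
variable (d : ℕ)

/-- the set of the (at most) `d` lightest neighbors of `v` -/
noncomputable def wsN (v : V) : Finset V :=
  Finset.univ.filter (fun x : V => G.Adj v x ∧
    (Finset.univ.filter (fun y : V => G.Adj v y ∧ tb s(v, y) s(v, x))).card < d)

variable {G tb d}

lemma ws_rk_lt {v x y : V} (hx : G.Adj v x) (hy : G.Adj v y) (hxy : tb s(v, x) s(v, y)) :
    (Finset.univ.filter (fun z : V => G.Adj v z ∧ tb s(v, z) s(v, x))).card <
    (Finset.univ.filter (fun z : V => G.Adj v z ∧ tb s(v, z) s(v, y))).card := by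
  apply Finset.card_lt_card
  constructor
  · intro z hz
    rw [Finset.mem_filter] at hz ⊢
    exact ⟨hz.1, hz.2.1, IsTrans.trans _ _ _ hz.2.2 hxy⟩
  · intro hsub
    have hxmem : x ∈ Finset.univ.filter (fun z : V => G.Adj v z ∧ tb s(v, z) s(v, y)) := by
      rw [Finset.mem_filter]; exact ⟨Finset.mem_univ _, hx, hxy⟩
    have := hsub hxmem
    rw [Finset.mem_filter] at this
    exact irrefl _ this.2.2

lemma ws_sym2_ne {v x y : V} (hx : G.Adj v x) (hxy : x ≠ y) : s(v, x) ≠ s(v, y) := by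
  intro h
  exact hxy (Sym2.congr_right.mp h)

lemma ws_card_N {v : V} (hd : d ≤ (Finset.univ.filter (fun x : V => G.Adj v x)).card) :
    (wsN G tb d v).card = d := by
  classical
  set nb := Finset.univ.filter (fun x : V => G.Adj v x) with hnb
  set rk : V → ℕ := fun x =>
    (Finset.univ.filter (fun y : V => G.Adj v y ∧ tb s(v, y) s(v, x))).card with hrk
  have hinj : Set.InjOn rk nb := by
    intro x hx y hy hxyrk
    by_contra hne
    rw [hnb, Finset.coe_filter] at hx hy
    have hax : G.Adj v x := hx.2
    have hay : G.Adj v y := hy.2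
    rcases trichotomous_of tb s(v, x) s(v, y) with h | h | h
    · exact absurd hxyrk (Nat.ne_of_lt (ws_rk_lt hax hay h))
    · exact ws_sym2_ne hax hne h
    · exact absurd hxyrk.symm (Nat.ne_of_lt (ws_rk_lt hay hax h))
  have hrklt : ∀ x ∈ nb, rk x < nb.card := by
    intro x hx
    have hsub : Finset.univ.filter (fun y : V => G.Adj v y ∧ tb s(v, y) s(v, x))
        ⊆ nb.erase x := by
      intro z hz
      rw [Finset.mem_filter] at hz
      rw [Finset.mem_erase]
      refine ⟨?_, by rw [hnb, Finset.mem_filter]; exact ⟨Finset.mem_univ _, hz.2.1⟩⟩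
      intro hzx
      subst hzx
      exact irrefl _ hz.2.2
    calc rk x ≤ (nb.erase x).card := Finset.card_le_card hsub
    _ < nb.card := Finset.card_erase_lt_of_mem hx
  have himg : nb.image rk = Finset.range nb.card := by
    apply Finset.eq_of_subset_of_card_le
    · intro r hr
      rw [Finset.mem_image] at hr
      obtain ⟨x, hx, rfl⟩ := hr
      rw [Finset.mem_range]
      exact hrklt x hx
    · rw [Finset.card_range, Finset.card_image_of_injOn hinj]
  have hNeq : wsN G tb d v = nb.filter (fun x => rk x < d) := by
    rw [wsN, hnb, Finset.filter_filter]
  have himg2 : (wsN G tb d v).image rk = Finset.range d := by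
    apply Finset.Subset.antisymm
    · intro r hr
      rw [Finset.mem_image] at hr
      obtain ⟨x, hx, rfl⟩ := hr
      rw [hNeq, Finset.mem_filter] at hx
      rw [Finset.mem_range]
      exact hx.2
    · intro r hr
      rw [Finset.mem_range] at hr
      have : r ∈ Finset.range nb.card := Finset.mem_range.mpr (lt_of_lt_of_le hr hd)
      rw [← himg, Finset.mem_image] at this
      obtain ⟨x, hx, rfl⟩ := this
      rw [Finset.mem_image]
      exact ⟨x, by rw [hNeq, Finset.mem_filter]; exact ⟨hx, hr⟩, rfl⟩
  have hsubnb : (wsN G tb d v) ⊆ nb := by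
    rw [hNeq]; exact Finset.filter_subset _ _
  have hc := Finset.card_image_of_injOn
    (s := wsN G tb d v) (f := rk) (fun x hx y hy => hinj (hsubnb hx) (hsubnb hy))
  rw [himg2, Finset.card_range] at hc
  exact hc.symm

lemma ws_w_le {w : Sym2 V → ℝ} (htb : ∀ e f, tb e f → w e ≤ w f) {u v : V}
    (huv : G.Adj v u)
    (hcnt : d ≤ (Finset.univ.filter (fun x : V => G.Adj v x ∧ tb s(v, x) s(v, u))).card)
    {x : V} (hx : x ∈ wsN G tb d v) : w s(v, x) ≤ w s(v, u) := by
  rw [wsN, Finset.mem_filter] at hx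
  obtain ⟨-, hadj, hrk⟩ := hx
  by_contra hgt
  push_neg at hgt
  have hne : s(v, x) ≠ s(v, u) := by
    intro h; rw [h] at hgt; exact lt_irrefl _ hgt
  have hux : tb s(v, u) s(v, x) := by
    rcases trichotomous_of tb s(v, x) s(v, u) with h | h | h
    · exact absurd (htb _ _ h) (not_le.mpr hgt)
    · exact absurd h hne
    · exact h
  have hsub : insert u (Finset.univ.filter (fun y : V => G.Adj v y ∧ tb s(v, y) s(v, u)))
      ⊆ Finset.univ.filter (fun y : V => G.Adj v y ∧ tb s(v, y) s(v, x)) := by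
    intro z hz
    rw [Finset.mem_insert] at hz
    rcases hz with rfl | hz
    · rw [Finset.mem_filter]; exact ⟨Finset.mem_univ _, huv, hux⟩
    · rw [Finset.mem_filter] at hz ⊢
      exact ⟨hz.1, hz.2.1, IsTrans.trans _ _ _ hz.2.2 hux⟩
  have hnotmem : u ∉ Finset.univ.filter (fun y : V => G.Adj v y ∧ tb s(v, y) s(v, u)) := by
    rw [Finset.mem_filter]
    rintro ⟨-, -, h⟩
    exact irrefl _ h
  have := Finset.card_le_card hsub
  rw [Finset.card_insert_of_notMem hnotmem] at this
  omega

end nstar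

/-- Theorem 2 (main structural result) of "Weighted Additive Spanners".
`H` is a `d`-light initialization of `G`: for a fixed strict total order `tb`
on edges refining the weight order (the tie-break), `H` contains exactly those
edges of `G` that are among the `d` lightest at one of their endpoints.  If `π`
is a shortest path of `G` (w.r.t. the positive weights `w`) missing `ℓ ≥ 1`
edges in `H`, then at least `d·ℓ/12` vertices are adjacent in `H` to a vertex
of `π`. -/
theorem stmt_9 {V : Type*} [Fintype V] (G H : SimpleGraph V) (hHG : H ≤ G)
    (w : Sym2 V → ℝ) (hpos : ∀ e ∈ G.edgeSet, 0 < w e)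
    (d : ℕ) (tb : Sym2 V → Sym2 V → Prop) [IsStrictTotalOrder (Sym2 V) tb]
    (htb : ∀ e f, tb e f → w e ≤ w f)
    (hlight : ∀ u v : V, H.Adj u v ↔ G.Adj u v ∧
      ((Finset.univ.filter (fun x : V => G.Adj u x ∧ tb s(u, x) s(u, v))).card < d ∨
       (Finset.univ.filter (fun x : V => G.Adj v x ∧ tb s(v, x) s(v, u))).card < d))
    {s t : V} (p : G.Walk s t) (hpath : p.IsPath)
    (hshort : ∀ q : G.Walk s t, walkWeight w p ≤ walkWeight w q)
    (ℓ : ℕ) (hℓ : 1 ≤ ℓ)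
    (hmiss : (p.edges.filter (fun e => e ∉ H.edgeSet)).length = ℓ) :
    (d * ℓ : ℝ) / 12 ≤
      ((Finset.univ.filter (fun x : V => ∃ u ∈ p.support, H.Adj u x)).card : ℝ) := by
  classical
  set e0 : Sym2 V := s(s, s) with he0
  set U := Finset.univ.filter (fun x : V => ∃ u ∈ p.support, H.Adj u x) with hU
  set wt : ℕ → ℝ := fun i => w (p.edges.getD i e0) with hwt
  have hwtpos : ∀ i, i < p.length → 0 < wt i := by
    intro i hi
    have hmem : p.edges.getD i e0 ∈ p.edges := by
      rw [List.getD_eq_getElem _ _ (by rwa [p.length_edges])]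
      exact List.getElem_mem _
    exact hpos _ (p.edges_subset_edgeSet hmem)
  have hadj : ∀ i, i < p.length → G.Adj (p.getVert i) (p.getVert (i+1)) :=
    fun i hi => p.adj_getVert_succ hi
  have hsupp : ∀ i : ℕ, p.getVert i ∈ p.support := by
    intro i
    rw [SimpleGraph.Walk.mem_support_iff_exists_getVert]
    rcases le_or_gt i p.length with h | h
    · exact ⟨i, rfl, h⟩
    · exact ⟨p.length, by rw [SimpleGraph.Walk.getVert_of_length_le p (le_of_lt h),
        SimpleGraph.Walk.getVert_length], le_refl _⟩
  have hNU : ∀ v_ : V, v_ ∈ p.support → wsN G tb d v_ ⊆ U := by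
    intro v_ hv x hx
    rw [hU, Finset.mem_filter]
    refine ⟨Finset.mem_univ _, v_, hv, ?_⟩
    rw [wsN, Finset.mem_filter] at hx
    rw [hlight]
    exact ⟨hx.2.1, Or.inl hx.2.2⟩
  -- the set of indices of missing edges
  set K := (Finset.range p.length).filter (fun i => p.edges.getD i e0 ∉ H.edgeSet) with hKdef
  have hKcard : K.card = ℓ := by
    have hlen := ws_filter_len (fun e : Sym2 V => decide (e ∉ H.edgeSet)) e0 p.edges
    rw [hmiss] at hlen
    rw [hKdef, hlen, p.length_edges]
    congr 1
    apply Finset.filter_congr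
    intro i _
    simp
  have hKfacts : ∀ i ∈ K,
      (d ≤ (Finset.univ.filter (fun x : V => G.Adj (p.getVert i) x ∧
          tb s(p.getVert i, x) s(p.getVert i, p.getVert (i+1)))).card) ∧
      (d ≤ (Finset.univ.filter (fun x : V => G.Adj (p.getVert (i+1)) x ∧
          tb s(p.getVert (i+1), x) s(p.getVert (i+1), p.getVert i))).card) := by
    intro i hi
    rw [hKdef, Finset.mem_filter, Finset.mem_range] at hi
    obtain ⟨hilt, hnotH⟩ := hi
    rw [ws_edges_getD e0 p i hilt, SimpleGraph.mem_edgeSet] at hnotH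
    rw [hlight] at hnotH
    push_neg at hnotH
    have h2 := hnotH (hadj i hilt)
    exact ⟨h2.1, h2.2⟩
  set idx : ℕ → ℕ := fun j =>
    if h : j < ℓ then ((Finset.orderIsoOfFin K hKcard) ⟨j, h⟩ : ℕ) else p.length + j with hidxdef
  have hidxK : ∀ j, j < ℓ → idx j ∈ K := by
    intro j hj
    rw [hidxdef]
    simp only [dif_pos hj]
    exact ((Finset.orderIsoOfFin K hKcard) ⟨j, hj⟩).2
  have hidxlt : ∀ j, j < ℓ → idx j < p.length := by
    intro j hj
    have := hidxK j hj
    rw [hKdef, Finset.mem_filter, Finset.mem_range] at this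
    exact this.1
  have hidxmono : ∀ j k, j < k → k < ℓ → idx j < idx k := by
    intro j k hjk hk
    rw [hidxdef]
    simp only [dif_pos (lt_trans hjk hk), dif_pos hk]
    exact Subtype.coe_lt_coe.mpr
      ((Finset.orderIsoOfFin K hKcard).lt_iff_lt.mpr (Fin.mk_lt_mk.mpr hjk))
  set uu : ℕ → V := fun j => p.getVert (idx j) with huu
  set vv : ℕ → V := fun j => p.getVert (idx j + 1) with hvv
  set WW : ℕ → ℝ := fun j => wt (idx j) with hWWdef
  have hWWpos : ∀ j, j < ℓ → 0 < WW j := fun j hj => hwtpos _ (hidxlt j hj)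
  have hWWeq : ∀ j, j < ℓ → WW j = w s(uu j, vv j) := by
    intro j hj
    rw [hWWdef, hwt, huu, hvv]
    simp only
    rw [ws_edges_getD e0 p _ (hidxlt j hj)]
  have hadjj : ∀ j, j < ℓ → G.Adj (uu j) (vv j) := fun j hj => hadj _ (hidxlt j hj)
  have hcntu : ∀ j, j < ℓ → d ≤ (Finset.univ.filter (fun x : V => G.Adj (uu j) x ∧
      tb s(uu j, x) s(uu j, vv j))).card := fun j hj => (hKfacts _ (hidxK j hj)).1
  have hcntv : ∀ j, j < ℓ → d ≤ (Finset.univ.filter (fun x : V => G.Adj (vv j) x ∧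
      tb s(vv j, x) s(vv j, uu j))).card := fun j hj => (hKfacts _ (hidxK j hj)).2
  have hcardu : ∀ j, j < ℓ → (wsN G tb d (uu j)).card = d := by
    intro j hj
    apply ws_card_N
    refine le_trans (hcntu j hj) (Finset.card_le_card ?_)
    intro x hx
    rw [Finset.mem_filter] at hx ⊢
    exact ⟨hx.1, hx.2.1⟩
  have hcardv : ∀ j, j < ℓ → (wsN G tb d (vv j)).card = d := by
    intro j hj
    apply ws_card_N
    refine le_trans (hcntv j hj) (Finset.card_le_card ?_)
    intro x hx
    rw [Finset.mem_filter] at hx ⊢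
    exact ⟨hx.1, hx.2.1⟩
  have hwu : ∀ j, j < ℓ → ∀ x ∈ wsN G tb d (uu j), w s(uu j, x) ≤ WW j := by
    intro j hj x hx
    rw [hWWeq j hj]
    exact ws_w_le htb (hadjj j hj) (hcntu j hj) hx
  have hwv : ∀ j, j < ℓ → ∀ x ∈ wsN G tb d (vv j), w s(vv j, x) ≤ WW j := by
    intro j hj x hx
    rw [hWWeq j hj]
    have hres := ws_w_le htb (hadjj j hj).symm (hcntv j hj) hx
    rwa [show s(vv j, uu j) = s(uu j, vv j) from Sym2.eq_swap] at hres
  have hadjx : ∀ (v_ : V) (x : V), x ∈ wsN G tb d v_ → G.Adj v_ x := by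
    intro v_ x hx
    rw [wsN, Finset.mem_filter] at hx
    exact hx.2.1
  -- the key geometric inequality
  have key : ∀ a b : ℕ, a ≤ b → b ≤ p.length → ∀ x : V,
      G.Adj (p.getVert a) x → G.Adj x (p.getVert b) →
      ∀ T : Finset ℕ, T ⊆ Finset.Ico a b →
      ∑ i ∈ T, wt i ≤ w s(p.getVert a, x) + w s(x, p.getVert b) := by
    intro a b hab hb x h1 h2 T hT
    have h3 : ∑ i ∈ T, wt i ≤ ∑ i ∈ Finset.Ico a b, wt i := by
      apply Finset.sum_le_sum_of_subset_of_nonneg hT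
      intro i hi _
      rw [Finset.mem_Ico] at hi
      exact le_of_lt (hwtpos i (lt_of_lt_of_le hi.2 hb))
    refine le_trans h3 ?_
    rw [hwt]
    exact ws_splice w p hshort e0 a b hab hb h1 h2
  -- goodness classes
  set Rgood : ℕ → Prop := fun j => j + 2 < ℓ ∧ WW j < WW (j+1) + WW (j+2) with hRg
  set Lgood : ℕ → Prop := fun j => 2 ≤ j ∧ WW j < WW (j-1) + WW (j-2) with hLg
  set goodP : ℕ → Prop := fun j => Rgood j ∨ Lgood j with hgood
  set chosen : ℕ → Finset V :=
    fun j => if Rgood j then wsN G tb d (vv j) else wsN G tb d (uu j) with hchosen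
  have hchosensub : ∀ j, j < ℓ → chosen j ⊆ U := by
    intro j hj
    rw [hchosen]
    simp only
    split_ifs
    · exact hNU _ (hsupp _)
    · exact hNU _ (hsupp _)
  have hchosencard : ∀ j, j < ℓ → (chosen j).card = d := by
    intro j hj
    rw [hchosen]
    simp only
    split_ifs
    · exact hcardv j hj
    · exact hcardu j hj
  -- disjointness of chosen neighborhoods of far-apart good indices
  have hdisj : ∀ j k, j + 5 ≤ k → k < ℓ → goodP j → goodP k →
      Disjoint (chosen j) (chosen k) := by
    intro j k hjk hk hgj hgk
    have hjl : j < ℓ := by omega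
    rw [Finset.disjoint_left]
    intro x hxj hxk
    rw [hchosen] at hxj hxk
    simp only at hxj hxk
    have m1 : idx j < idx (j+1) := hidxmono _ _ (by omega) (by omega)
    have m2 : idx (j+1) < idx (j+2) := hidxmono _ _ (by omega) (by omega)
    have m3 : idx (j+2) < idx (k-2) := hidxmono _ _ (by omega) (by omega)
    have m4 : idx (k-2) < idx (k-1) := hidxmono _ _ (by omega) (by omega)
    have m5 : idx (k-1) < idx k := hidxmono _ _ (by omega) hk
    have hkp : idx k < p.length := hidxlt k hk
    by_cases hRj : Rgood j <;> by_cases hRk : Rgood k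
    · -- both right neighborhoods
      rw [if_pos hRj] at hxj
      rw [if_pos hRk] at hxk
      have h1 : G.Adj (p.getVert (idx j + 1)) x := hadjx _ _ hxj
      have h2 : G.Adj x (p.getVert (idx k + 1)) := (hadjx _ _ hxk).symm
      have hsum := key (idx j + 1) (idx k + 1) (by omega) (by omega) x h1 h2
        {idx (j+1), idx (j+2), idx k} ?_
      · rw [Finset.sum_insert (by simp; omega), Finset.sum_insert (by simp; omega),
          Finset.sum_singleton] at hsum
        have e1 : w s(p.getVert (idx j + 1), x) ≤ wt (idx j) := hwv j hjl x hxj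
        have e2 : w s(x, p.getVert (idx k + 1)) ≤ wt (idx k) := by
          rw [Sym2.eq_swap]; exact hwv k hk x hxk
        have hb1 : wt (idx j) < wt (idx (j+1)) + wt (idx (j+2)) := hRj.2
        have hp1 : 0 < wt (idx k) := hWWpos k hk
        linarith [hsum, e1, e2, hb1, hp1]
      · intro i hi
        simp only [Finset.mem_insert, Finset.mem_singleton] at hi
        rw [Finset.mem_Ico]
        rcases hi with rfl | rfl | rfl <;> omega
    · -- j right, k left
      have hLk : Lgood k := by
        rcases hgk with h | h
        · exact absurd h hRk
        · exact h
      rw [if_pos hRj] at hxj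
      rw [if_neg hRk] at hxk
      have h1 : G.Adj (p.getVert (idx j + 1)) x := hadjx _ _ hxj
      have h2 : G.Adj x (p.getVert (idx k)) := (hadjx _ _ hxk).symm
      have hsum := key (idx j + 1) (idx k) (by omega) (by omega) x h1 h2
        {idx (j+1), idx (j+2), idx (k-2), idx (k-1)} ?_
      · rw [Finset.sum_insert (by simp; omega), Finset.sum_insert (by simp; omega),
          Finset.sum_insert (by simp; omega), Finset.sum_singleton] at hsum
        have e1 : w s(p.getVert (idx j + 1), x) ≤ wt (idx j) := hwv j hjl x hxj
        have e2 : w s(x, p.getVert (idx k)) ≤ wt (idx k) := by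
          rw [Sym2.eq_swap]; exact hwu k hk x hxk
        have hb1 : wt (idx j) < wt (idx (j+1)) + wt (idx (j+2)) := hRj.2
        have hb2 : wt (idx k) < wt (idx (k-1)) + wt (idx (k-2)) := hLk.2
        linarith [hsum, e1, e2, hb1, hb2]
      · intro i hi
        simp only [Finset.mem_insert, Finset.mem_singleton] at hi
        rw [Finset.mem_Ico]
        rcases hi with rfl | rfl | rfl | rfl <;> omega
    · -- j left, k right
      rw [if_neg hRj] at hxj
      rw [if_pos hRk] at hxk
      have h1 : G.Adj (p.getVert (idx j)) x := hadjx _ _ hxj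
      have h2 : G.Adj x (p.getVert (idx k + 1)) := (hadjx _ _ hxk).symm
      have hsum := key (idx j) (idx k + 1) (by omega) (by omega) x h1 h2
        {idx j, idx (j+1), idx k} ?_
      · rw [Finset.sum_insert (by simp; omega), Finset.sum_insert (by simp; omega),
          Finset.sum_singleton] at hsum
        have e1 : w s(p.getVert (idx j), x) ≤ wt (idx j) := hwu j hjl x hxj
        have e2 : w s(x, p.getVert (idx k + 1)) ≤ wt (idx k) := by
          rw [Sym2.eq_swap]; exact hwv k hk x hxk
        have hp1 : 0 < wt (idx (j+1)) := hWWpos (j+1) (by omega)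
        linarith [hsum, e1, e2, hp1]
      · intro i hi
        simp only [Finset.mem_insert, Finset.mem_singleton] at hi
        rw [Finset.mem_Ico]
        rcases hi with rfl | rfl | rfl <;> omega
    · -- both left neighborhoods
      have hLk : Lgood k := by
        rcases hgk with h | h
        · exact absurd h hRk
        · exact h
      rw [if_neg hRj] at hxj
      rw [if_neg hRk] at hxk
      have h1 : G.Adj (p.getVert (idx j)) x := hadjx _ _ hxj
      have h2 : G.Adj x (p.getVert (idx k)) := (hadjx _ _ hxk).symm
      have hsum := key (idx j) (idx k) (by omega) (by omega) x h1 h2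
        {idx j, idx (k-2), idx (k-1)} ?_
      · rw [Finset.sum_insert (by simp; omega), Finset.sum_insert (by simp; omega),
          Finset.sum_singleton] at hsum
        have e1 : w s(p.getVert (idx j), x) ≤ wt (idx j) := hwu j hjl x hxj
        have e2 : w s(x, p.getVert (idx k)) ≤ wt (idx k) := by
          rw [Sym2.eq_swap]; exact hwu k hk x hxk
        have hb2 : wt (idx k) < wt (idx (k-1)) + wt (idx (k-2)) := hLk.2
        linarith [hsum, e1, e2, hb2]
      · intro i hi
        simp only [Finset.mem_insert, Finset.mem_singleton] at hi
        rw [Finset.mem_Ico]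
        rcases hi with rfl | rfl | rfl <;> omega
  -- counting bad indices
  set Gd := (Finset.range ℓ).filter goodP with hGddef
  set Bd := (Finset.range ℓ).filter (fun j => ¬ goodP j) with hBddef
  have hGdBd : Gd.card + Bd.card = ℓ := by
    rw [hGddef, hBddef, Finset.card_filter_add_card_filter_not, Finset.card_range]
  have hpair : ∀ j k, j < k → k ≤ j + 2 → j + 2 < ℓ → 2 ≤ k →
      ¬ goodP j → ¬ goodP k → False := by
    intro j k h1 h2 h3 h4 hgj hgk
    have hj1 : WW (j+1) + WW (j+2) ≤ WW j := by
      by_contra hcon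
      push_neg at hcon
      exact hgj (show goodP j from Or.inl (show Rgood j from ⟨h3, hcon⟩))
    have hk1 : WW (k-1) + WW (k-2) ≤ WW k := by
      by_contra hcon
      push_neg at hcon
      exact hgk (show goodP k from Or.inr (show Lgood k from ⟨h4, hcon⟩))
    rcases (by omega : k = j + 1 ∨ k = j + 2) with rfl | rfl
    · have hj1' : j + 1 - 1 = j := by omega
      have hj2' : j + 1 - 2 = j - 1 := by omega
      rw [hj1', hj2'] at hk1
      have hp1 := hWWpos (j-1) (by omega)
      have hp2 := hWWpos (j+2) (by omega)
      linarith
    · have hj1' : j + 2 - 1 = j + 1 := by omega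
      have hj2' : j + 2 - 2 = j := by omega
      rw [hj1', hj2'] at hk1
      have hp1 := hWWpos (j+1) (by omega)
      linarith
  set B2 := Bd.filter (fun j => 1 ≤ j ∧ j + 4 ≤ ℓ) with hB2def
  have hB2card : B2.card ≤ (ℓ - 5)/3 + 1 := by
    have hinj := Finset.card_le_card_of_injOn (s := B2) (t := Finset.range ((ℓ - 5)/3 + 1))
      (fun j => (j-1)/3) ?_ ?_
    · simpa using hinj
    · intro j hj
      rw [Finset.mem_coe, hB2def, Finset.mem_filter] at hj
      rw [Finset.mem_coe, Finset.mem_range]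
      show (j-1)/3 < (ℓ - 5)/3 + 1
      omega
    · intro j hj k hk heq
      have hj' : j ∈ B2 := hj
      have hk' : k ∈ B2 := hk
      have heq' : (j-1)/3 = (k-1)/3 := heq
      rw [hB2def, Finset.mem_filter, hBddef, Finset.mem_filter, Finset.mem_range] at hj' hk'
      by_contra hne
      rcases Nat.lt_or_ge j k with h | h
      · exact hpair j k h (by omega) (by omega) (by omega) hj'.1.2 hk'.1.2
      · have h' : k < j := by omega
        exact hpair k j h' (by omega) (by omega) (by omega) hk'.1.2 hj'.1.2
  have hBdcard : Bd.card ≤ B2.card + 4 := by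
    have hsub : Bd ⊆ B2 ∪ {0, ℓ-3, ℓ-2, ℓ-1} := by
      intro j hj
      rw [Finset.mem_union]
      by_cases hc : 1 ≤ j ∧ j + 4 ≤ ℓ
      · left
        rw [hB2def, Finset.mem_filter]
        exact ⟨hj, hc⟩
      · right
        have hjr : j < ℓ := by
          rw [hBddef, Finset.mem_filter, Finset.mem_range] at hj
          exact hj.1
        simp only [Finset.mem_insert, Finset.mem_singleton]
        omega
    have h4 : ({0, ℓ-3, ℓ-2, ℓ-1} : Finset ℕ).card ≤ 4 := by
      refine le_trans (Finset.card_insert_le _ _) (Nat.succ_le_succ ?_)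
      refine le_trans (Finset.card_insert_le _ _) (Nat.succ_le_succ ?_)
      refine le_trans (Finset.card_insert_le _ _) (Nat.succ_le_succ ?_)
      simp
    calc Bd.card ≤ (B2 ∪ {0, ℓ-3, ℓ-2, ℓ-1}).card := Finset.card_le_card hsub
      _ ≤ B2.card + ({0, ℓ-3, ℓ-2, ℓ-1} : Finset ℕ).card := Finset.card_union_le _ _
      _ ≤ B2.card + 4 := by omega
  -- best residue class mod 5
  have hfib : Gd.card = ∑ r ∈ Finset.range 5, (Gd.filter (fun j => j % 5 = r)).card :=
    Finset.card_eq_sum_card_fiberwise (fun j _ => Finset.mem_range.mpr (Nat.mod_lt _ (by norm_num)))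
  obtain ⟨r, hr5, hrmax⟩ := Finset.exists_max_image (Finset.range 5)
    (fun r => (Gd.filter (fun j => j % 5 = r)).card) ⟨0, by norm_num⟩
  set S := Gd.filter (fun j => j % 5 = r) with hSdef
  have hGd5 : Gd.card ≤ 5 * S.card := by
    rw [hfib]
    calc ∑ r' ∈ Finset.range 5, (Gd.filter (fun j => j % 5 = r')).card
        ≤ ∑ _r' ∈ Finset.range 5, S.card := Finset.sum_le_sum (fun r' hr' => hrmax r' hr')
      _ = 5 * S.card := by rw [Finset.sum_const, Finset.card_range, smul_eq_mul]
  have hSmem : ∀ j ∈ S, j < ℓ ∧ goodP j ∧ j % 5 = r := by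
    intro j hj
    rw [hSdef, Finset.mem_filter, hGddef, Finset.mem_filter, Finset.mem_range] at hj
    exact ⟨hj.1.1, hj.1.2, hj.2⟩
  have hSdisj : ∀ a ∈ S, ∀ b ∈ S, a ≠ b → Disjoint (chosen a) (chosen b) := by
    intro a ha b hb hab
    obtain ⟨hal, hag, har⟩ := hSmem a ha
    obtain ⟨hbl, hbg, hbr⟩ := hSmem b hb
    rcases Nat.lt_or_ge a b with h | h
    · exact hdisj a b (by omega) hbl hag hbg
    · exact (hdisj b a (by omega) hal hbg hag).symm
  have hbi : (S.biUnion chosen).card = S.card * d := by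
    rw [Finset.card_biUnion hSdisj]
    rw [Finset.sum_congr rfl (fun j hj => hchosencard j (hSmem j hj).1),
      Finset.sum_const, smul_eq_mul]
  have hbiU : S.biUnion chosen ⊆ U := by
    apply Finset.biUnion_subset.mpr
    intro j hj
    exact hchosensub j (hSmem j hj).1
  have hUS : S.card * d ≤ U.card := by
    rw [← hbi]
    exact Finset.card_le_card hbiU
  -- final arithmetic
  rcases le_or_gt ℓ 12 with hsmall | hbig
  · have h0 : 0 < ℓ := hℓ
    have hbase : d ≤ U.card := by
      calc d = (wsN G tb d (vv 0)).card := (hcardv 0 h0).symm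
        _ ≤ U.card := Finset.card_le_card (hNU _ (hsupp _))
    rw [div_le_iff₀ (by norm_num : (0:ℝ) < 12)]
    have h1 : (ℓ:ℝ) ≤ 12 := by exact_mod_cast hsmall
    have h2 : (d:ℝ) ≤ (U.card : ℝ) := by exact_mod_cast hbase
    have h3 : (0:ℝ) ≤ (d:ℝ) := Nat.cast_nonneg d
    nlinarith
  · have h12 : ℓ ≤ 12 * S.card := by omega
    rw [div_le_iff₀ (by norm_num : (0:ℝ) < 12)]
    have hnat : d * ℓ ≤ U.card * 12 := by
      calc d * ℓ ≤ d * (12 * S.card) := Nat.mul_le_mul_left _ h12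
        _ = (S.card * d) * 12 := by ring
        _ ≤ U.card * 12 := Nat.mul_le_mul_right _ hUS
    exact_mod_cast hnat
end

section
/- Let G be a finite weighted graph with maximum edge weight W, let H be a subgraph, and suppose v' is a vertex adjacent in H to a vertex v, with dist_H(s, v') = dist_G(s, v') and dist_H(t, v'') = dist_G(t, v'') for some vertex v'' adjacent in H to v, where v lies on a shortest s–t path in G. Then dist_H(s, t) ≤ dist_G(s, t) + 4W. -/
/-- Weighted distance in a graph: the infimum of the weights of all walks
between the two vertices. -/
noncomputable def wdist {V : Type*} (G : SimpleGraph V) (w : Sym2 V → ℝ)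
    (s t : V) : ℝ :=
  sInf {x : ℝ | ∃ p : G.Walk s t, walkWeight w p = x}

section aux
variable {V : Type*} {G : SimpleGraph V} (w : Sym2 V → ℝ)

lemma walkWeight_append {a b c : V} (p : G.Walk a b) (q : G.Walk b c) :
    walkWeight w (p.append q) = walkWeight w p + walkWeight w q := by
  simp [walkWeight]

lemma walkWeight_reverse {a b : V} (p : G.Walk a b) :
    walkWeight w p.reverse = walkWeight w p := by
  simp [walkWeight, List.sum_reverse]

lemma walkWeight_cons {a b c : V} (h : G.Adj a b) (q : G.Walk b c) :
    walkWeight w (SimpleGraph.Walk.cons h q) = w s(a, b) + walkWeight w q := by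
  simp [walkWeight]

lemma walkWeight_nonneg (h0 : ∀ e ∈ G.edgeSet, 0 ≤ w e) {a b : V} (p : G.Walk a b) :
    0 ≤ walkWeight w p := by
  apply List.sum_nonneg
  intro x hx
  obtain ⟨e, he, rfl⟩ := List.mem_map.mp hx
  exact h0 e (p.edges_subset_edgeSet he)

lemma walkWeight_ge (m : ℝ) (hm : ∀ e ∈ G.edgeSet, m ≤ w e)
    (h0 : ∀ e ∈ G.edgeSet, 0 ≤ w e) {a b : V} (hab : a ≠ b) (q : G.Walk a b) :
    m ≤ walkWeight w q := by
  cases q with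
  | nil => exact absurd rfl hab
  | @cons _ c _ h q' =>
    have h1 : m ≤ w s(a, c) := hm _ h
    have h2 : 0 ≤ walkWeight w q' := walkWeight_nonneg w h0 q'
    rw [walkWeight_cons]
    linarith

lemma wdist_bddBelow (h0 : ∀ e ∈ G.edgeSet, 0 ≤ w e) (a b : V) :
    BddBelow {x : ℝ | ∃ p : G.Walk a b, walkWeight w p = x} :=
  ⟨0, fun _ ⟨r, hr⟩ => hr ▸ walkWeight_nonneg w h0 r⟩

lemma wdist_le (h0 : ∀ e ∈ G.edgeSet, 0 ≤ w e) {a b : V} (q : G.Walk a b) :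
    wdist G w a b ≤ walkWeight w q :=
  csInf_le (wdist_bddBelow w h0 a b) ⟨q, rfl⟩

end aux

/-- The near-connected error analysis in Theorem 6 of "Weighted Additive
Spanners": if `v` lies on a shortest `s`–`t` path of `G` and has `H`-neighbors
`v'` and `v''` with `dist_H(s,v') = dist_G(s,v')` and
`dist_H(t,v'') = dist_G(t,v'')`, then `dist_H(s,t) ≤ dist_G(s,t) + 4W`. -/
theorem stmt_17 {V : Type*} [Fintype V] (G H : SimpleGraph V) (hHG : H ≤ G)
    (w : Sym2 V → ℝ) (W : ℝ) (hw : ∀ e ∈ G.edgeSet, 0 < w e ∧ w e ≤ W)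
    {s t : V} (p : G.Walk s t)
    (hshort : ∀ q : G.Walk s t, walkWeight w p ≤ walkWeight w q)
    (v v' v'' : V) (hv : v ∈ p.support)
    (hv' : H.Adj v v') (hv'' : H.Adj v v'')
    (hnear' : wdist H w s v' = wdist G w s v')
    (hnear'' : wdist H w t v'' = wdist G w t v'') :
    wdist H w s t ≤ wdist G w s t + 4 * W := by
  classical
  have hG0 : ∀ e ∈ G.edgeSet, 0 ≤ w e := fun e he => (hw e he).1.le
  -- edges in G
  have hGv' : G.Adj v v' := hHG hv'
  have hGv'' : G.Adj v v'' := hHG hv''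
  have hev' : s(v, v') ∈ G.edgeSet := hGv'
  have hev'' : s(v, v'') ∈ G.edgeSet := hGv''
  have hWpos : 0 < W := lt_of_lt_of_le (hw _ hev').1 (hw _ hev').2
  -- split p at v
  set p1 := p.takeUntil v hv with hp1
  set p2 := p.dropUntil v hv with hp2
  have hsplit : walkWeight w p = walkWeight w p1 + walkWeight w p2 := by
    conv_lhs => rw [← p.take_spec hv]
    exact walkWeight_append w p1 p2
  -- wdist G s t = walkWeight w p
  have hGst : wdist G w s t = walkWeight w p := by
    refine le_antisymm (wdist_le w hG0 p) (le_csInf ⟨_, p, rfl⟩ ?_)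
    rintro x ⟨q, rfl⟩
    exact hshort q
  -- minimum edge weight m
  have hfin : G.edgeSet.Finite := Set.toFinite _
  set F : Finset ℝ := hfin.toFinset.image w with hF
  have hFne : F.Nonempty := ⟨w s(v, v'), Finset.mem_image.mpr ⟨_, hfin.mem_toFinset.mpr hev', rfl⟩⟩
  set m := F.min' hFne with hm
  have hmle : ∀ e ∈ G.edgeSet, m ≤ w e := fun e he =>
    F.min'_le _ (Finset.mem_image.mpr ⟨e, hfin.mem_toFinset.mpr he, rfl⟩)
  have hmpos : 0 < m := by
    obtain ⟨x, hx, hxm⟩ := Finset.mem_image.mp (F.min'_mem hFne)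
    rw [hm, ← hxm]
    exact (hw x (hfin.mem_toFinset.mp hx)).1
  -- nonemptiness of H walk sets
  have key : ∀ (a b : V), wdist H w a b = wdist G w a b → (∃ q : G.Walk a b, True) →
      {x : ℝ | ∃ r : H.Walk a b, walkWeight w r = x}.Nonempty := by
    intro a b heq ⟨q, _⟩
    by_contra hemp
    rw [Set.not_nonempty_iff_eq_empty] at hemp
    have h0 : wdist H w a b = 0 := by rw [wdist, hemp, Real.sInf_empty]
    rcases eq_or_ne a b with rfl | hab
    · have hmem : walkWeight w (SimpleGraph.Walk.nil : H.Walk a a) ∈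
          {x : ℝ | ∃ r : H.Walk a a, walkWeight w r = x} := ⟨_, rfl⟩
      rw [hemp] at hmem
      exact hmem
    · have hge : m ≤ wdist G w a b := le_csInf ⟨_, q, rfl⟩ (by rintro x ⟨r, rfl⟩; exact walkWeight_ge w m hmle hG0 hab r)
      rw [← heq, h0] at hge
      linarith
  have hne1 : {x : ℝ | ∃ r : H.Walk s v', walkWeight w r = x}.Nonempty :=
    key s v' hnear' ⟨p1.append (SimpleGraph.Walk.cons hGv' SimpleGraph.Walk.nil), trivial⟩
  have hne2 : {x : ℝ | ∃ r : H.Walk t v'', walkWeight w r = x}.Nonempty :=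
    key t v'' hnear'' ⟨p2.reverse.append (SimpleGraph.Walk.cons hGv'' SimpleGraph.Walk.nil), trivial⟩
  -- H edge weights nonneg
  have hH0 : ∀ e ∈ H.edgeSet, 0 ≤ w e := fun e he => hG0 e (SimpleGraph.edgeSet_mono hHG he)
  -- dist_H(s,t) ≤ x + y + 2W for x ∈ S1, y ∈ S2
  have hstep : ∀ x ∈ {x : ℝ | ∃ r : H.Walk s v', walkWeight w r = x},
      ∀ y ∈ {x : ℝ | ∃ r : H.Walk t v'', walkWeight w r = x},
      wdist H w s t ≤ x + y + 2 * W := by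
    rintro x ⟨q1, rfl⟩ y ⟨q2, rfl⟩
    have hwalk : H.Walk s t :=
      q1.append (SimpleGraph.Walk.cons hv'.symm (SimpleGraph.Walk.cons hv'' q2.reverse))
    have hle := wdist_le w hH0 (q1.append (SimpleGraph.Walk.cons hv'.symm (SimpleGraph.Walk.cons hv'' q2.reverse)))
    rw [walkWeight_append, walkWeight_cons, walkWeight_cons, walkWeight_reverse] at hle
    have hw1 : w s(v', v) ≤ W := by
      have : s(v', v) ∈ G.edgeSet := hGv'.symm
      exact (hw _ this).2
    have hw2 : w s(v, v'') ≤ W := (hw _ hev'').2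
    linarith
  -- so wdist H s t ≤ sInf S1 + sInf S2 + 2W
  have hmain : wdist H w s t ≤ wdist H w s v' + wdist H w t v'' + 2 * W := by
    have h1 : ∀ y ∈ {x : ℝ | ∃ r : H.Walk t v'', walkWeight w r = x},
        wdist H w s t - y - 2 * W ≤ wdist H w s v' := by
      intro y hy
      conv_rhs => rw [wdist]
      apply le_csInf hne1
      intro x hx
      have := hstep x hx y hy
      linarith
    have h2 : wdist H w s t - wdist H w s v' - 2 * W ≤ wdist H w t v'' := by
      conv_rhs => rw [wdist]
      apply le_csInf hne2
      intro y hy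
      have := h1 y hy
      linarith
    linarith
  -- dist_G(s,v') ≤ walkWeight p1 + W
  have hb1 : wdist G w s v' ≤ walkWeight w p1 + W := by
    have := wdist_le w hG0 (p1.append (SimpleGraph.Walk.cons hGv' SimpleGraph.Walk.nil))
    rw [walkWeight_append, walkWeight_cons] at this
    have h0 : walkWeight w (SimpleGraph.Walk.nil : G.Walk v' v') = 0 := by simp [walkWeight]
    rw [h0] at this
    have := (hw _ hev').2
    linarith [wdist_le w hG0 (p1.append (SimpleGraph.Walk.cons hGv' SimpleGraph.Walk.nil))]
  have hb2 : wdist G w t v'' ≤ walkWeight w p2 + W := by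
    have hle := wdist_le w hG0 (p2.reverse.append (SimpleGraph.Walk.cons hGv'' SimpleGraph.Walk.nil))
    rw [walkWeight_append, walkWeight_cons, walkWeight_reverse] at hle
    have h0 : walkWeight w (SimpleGraph.Walk.nil : G.Walk v'' v'') = 0 := by simp [walkWeight]
    rw [h0] at hle
    have := (hw _ hev'').2
    linarith
  rw [hGst, hsplit]
  rw [hnear', hnear''] at hmain
  linarith
end
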